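/- Let μ, ν ∈ P(ℝ) and F a CDF, all symmetric (a distribution η is symmetric around its median m if F_η(x) + F_η(2m − x) = 1 for all continuity points x, equivalently Q_η(1/2+u) = 2m − Q_η(1/2−u)). Define A F = F_μ ∘ (φ ∗ (Q_ν ∘ (φ ∗ F))). If ν has compact support, then A F is symmetric and the median of A F equals the median of F. -/

import Mathlib

open MeasureTheory ProbabilityTheory Filter Topology

noncomputable def stdGauss (x : ℝ) : ℝ := Real.exp (-(x ^ 2) / 2) / Real.sqrt (2 * Real.pi)

noncomputable def quantile (ν : Measure ℝ) (u : ℝ) : ℝ :=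
  sInf {x : ℝ | u ≤ ProbabilityTheory.cdf ν x}

def IsCDF (F : ℝ → ℝ) : Prop :=
  Monotone F ∧ (∀ x, F x ∈ Set.Icc (0 : ℝ) 1) ∧
    Filter.Tendsto F Filter.atBot (nhds 0) ∧ Filter.Tendsto F Filter.atTop (nhds 1)

/-- The fixed-point operator `A F = F_μ ∘ (φ ∗ (Q_ν ∘ (φ ∗ F)))`. -/
noncomputable def opA (μ ν : Measure ℝ) (F : ℝ → ℝ) : ℝ → ℝ := fun x =>
  ProbabilityTheory.cdf μ (∫ y, quantile ν (∫ z, F (x - y - z) * stdGauss z) * stdGauss y)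

/-!
Convolution with the even density `φ` preserves point symmetry: if `G x + G (2m - x) = c` for
all `x`, the same holds for `φ ∗ G`. Hence `φ ∗ F` is symmetric about `m₁` and, being positive
by monotonicity, takes values in `(0, 1)`. There `Q_ν` is monotone, bounded (compact support) and
symmetric, so `Q_ν ∘ (φ ∗ F)` satisfies `Q w + Q (2m₁ - w) = 2m₂`, which a second smoothing keeps.
The symmetry of `F_μ` about `m₂` turns this into `A F x + A F (2m₁ - x) = 1`; at `x = m₁` it gives
`A F m₁ = 1/2`.
-/

lemma stdGauss_eq_gaussianPDFReal : stdGauss = gaussianPDFReal 0 1 := by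
  ext x
  simp [stdGauss, gaussianPDFReal, div_eq_mul_inv, mul_comm]

lemma stdGauss_pos (x : ℝ) : 0 < stdGauss x := by
  rw [stdGauss_eq_gaussianPDFReal]; exact gaussianPDFReal_pos 0 1 x one_ne_zero

lemma integrable_stdGauss : Integrable stdGauss := by
  rw [stdGauss_eq_gaussianPDFReal]; exact integrable_gaussianPDFReal 0 1

lemma integral_stdGauss : ∫ x, stdGauss x = 1 := by
  rw [stdGauss_eq_gaussianPDFReal]; exact integral_gaussianPDFReal_eq_one 0 one_ne_zero

lemma stdGauss_neg (x : ℝ) : stdGauss (-x) = stdGauss x := by simp [stdGauss]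

lemma measurable_stdGauss : Measurable stdGauss := by
  unfold stdGauss; fun_prop

lemma eq_half_of_add_reflect {f : ℝ → ℝ} {m : ℝ} (h : ∀ x, f x + f (2 * m - x) = 1) :
    f m = 1 / 2 := by
  have := h m
  rw [two_mul, add_sub_cancel_right] at this
  linarith

noncomputable def gaussSmooth (G : ℝ → ℝ) (x : ℝ) : ℝ := ∫ z, G (x - z) * stdGauss z

lemma opA_eq_cdf_gaussSmooth (μ ν : Measure ℝ) (F : ℝ → ℝ) (x : ℝ) :
    opA μ ν F x = cdf μ (gaussSmooth (fun w => quantile ν (gaussSmooth F w)) x) := rfl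

section GaussSmooth

variable {G : ℝ → ℝ} {C : ℝ}

lemma integrable_mul_stdGauss (hGm : Measurable G) (hGb : ∀ x, |G x| ≤ C) :
    Integrable (fun z => G z * stdGauss z) := by
  refine (integrable_stdGauss.const_mul C).mono' (hGm.mul measurable_stdGauss).aestronglyMeasurable
    (Eventually.of_forall fun z => ?_)
  rw [Real.norm_eq_abs, abs_mul, abs_of_pos (stdGauss_pos z)]
  exact mul_le_mul_of_nonneg_right (hGb z) (stdGauss_pos z).le

lemma integrable_comp_sub_mul_stdGauss (hGm : Measurable G) (hGb : ∀ x, |G x| ≤ C) (x : ℝ) :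
    Integrable (fun z => G (x - z) * stdGauss z) :=
  integrable_mul_stdGauss (hGm.comp (measurable_const.sub measurable_id)) (fun _ => hGb _)

lemma gaussSmooth_add_reflect {m c : ℝ} (hGm : Measurable G) (hGb : ∀ x, |G x| ≤ C)
    (hsym : ∀ x, G x + G (2 * m - x) = c) (x : ℝ) :
    gaussSmooth G x + gaussSmooth G (2 * m - x) = c := by
  have hreflect : gaussSmooth G (2 * m - x) = gaussSmooth (fun t => G (2 * m - t)) x := by
    rw [gaussSmooth, ← integral_neg_eq_self]
    congr 1; ext z
    rw [stdGauss_neg]; ring_nf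
  have hGm' : Measurable fun t => G (2 * m - t) := hGm.comp (measurable_const.sub measurable_id)
  rw [hreflect, gaussSmooth, gaussSmooth, ← integral_add
    (integrable_comp_sub_mul_stdGauss hGm hGb x)
    (integrable_comp_sub_mul_stdGauss hGm' (fun _ => hGb _) x)]
  simp only [← add_mul, hsym, integral_const_mul, integral_stdGauss, mul_one]

lemma gaussSmooth_mono (hG : Monotone G) (hGb : ∀ x, |G x| ≤ C) : Monotone (gaussSmooth G) :=
  fun a b hab => integral_mono (integrable_comp_sub_mul_stdGauss hG.measurable hGb a)
    (integrable_comp_sub_mul_stdGauss hG.measurable hGb b)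
    (fun z => mul_le_mul_of_nonneg_right (hG (by linarith)) (stdGauss_pos z).le)

/-- The integrand is positive on the half-line `z ≤ x - a`, which has positive Gaussian mass. -/
lemma gaussSmooth_pos {a : ℝ} (hG : Monotone G) (hGb : ∀ x, |G x| ≤ C) (hG0 : 0 ≤ G)
    (hGa : 0 < G a) (x : ℝ) : 0 < gaussSmooth G x := by
  rw [gaussSmooth, integral_pos_iff_support_of_nonneg
    (fun z => mul_nonneg (hG0 _) (stdGauss_pos z).le)
    (integrable_comp_sub_mul_stdGauss hG.measurable hGb x)]
  refine lt_of_lt_of_le (by simp) (measure_mono (s := Set.Iic (x - a)) fun z hz => ?_)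
  exact (mul_pos (hGa.trans_le (hG (by simp only [Set.mem_Iic] at hz; linarith)))
    (stdGauss_pos z)).ne'

end GaussSmooth

section Quantile

variable {ν : Measure ℝ}

lemma bddBelow_setOf_le_cdf {u : ℝ} (hu : 0 < u) : BddBelow {x | u ≤ cdf ν x} := by
  obtain ⟨x₀, hx₀⟩ := ((tendsto_cdf_atBot ν).eventually (gt_mem_nhds hu)).exists
  exact ⟨x₀, fun x hx => (monotone_cdf ν).reflect_lt (hx₀.trans_le hx) |>.le⟩

lemma nonempty_setOf_le_cdf {u : ℝ} (hu : u < 1) : {x | u ≤ cdf ν x}.Nonempty :=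
  ((tendsto_cdf_atTop ν).eventually (lt_mem_nhds hu)).exists.imp fun _ hx => hx.le

lemma quantile_monotoneOn : MonotoneOn (quantile ν) (Set.Ioo 0 1) :=
  fun _ hu _ hv huv => csInf_le_csInf (bddBelow_setOf_le_cdf hu.1) (nonempty_setOf_le_cdf hv.2)
    fun _ hx => huv.trans hx

lemma quantile_mem_Icc [IsProbabilityMeasure ν] {a b u : ℝ} (hν : ν (Set.Icc a b)ᶜ = 0)
    (hu : u ∈ Set.Ioc 0 1) : quantile ν u ∈ Set.Icc a b := by
  have hcdf_b : cdf ν b = 1 := by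
    have : ν (Set.Iic b) = 1 := (prob_compl_eq_zero_iff measurableSet_Iic).1 <|
      measure_mono_null (Set.compl_subset_compl.2 Set.Icc_subset_Iic_self) hν
    simp [cdf_eq_real, measureReal_def, this]
  have hcdf_lt : ∀ x < a, cdf ν x = 0 := by
    intro x hx
    rw [cdf_eq_real, measureReal_def, measure_mono_null (fun t ht hta => ?_) hν]
    · simp
    · exact absurd (hta.1.trans ht) (not_le.2 hx)
  have hb : b ∈ {x | u ≤ cdf ν x} := by simp only [Set.mem_ofPred_eq, hcdf_b, hu.2]
  have ha : a ∈ lowerBounds {x | u ≤ cdf ν x} := fun x hx => not_lt.1 fun hxa => by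
    simp only [Set.mem_ofPred_eq, hcdf_lt x hxa] at hx; linarith [hu.1]
  exact ⟨le_csInf ⟨b, hb⟩ ha, csInf_le ⟨a, ha⟩ hb⟩

end Quantile

/-- If `μ`, `ν` (compactly supported) and the CDF `F` are symmetric
(around `m₂`, `m₂` and `m₁` respectively), then `A F` is symmetric around `m₁`;
in particular the median of `A F` equals the median `m₁` of `F`. -/
theorem stmt_6 (μ ν : Measure ℝ) [IsProbabilityMeasure μ] [IsProbabilityMeasure ν]
    (K : Set ℝ) (hK : IsCompact K) (hνK : ν Kᶜ = 0)
    (F : ℝ → ℝ) (hF : IsCDF F) (m₁ m₂ : ℝ)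
    (hFsym : ∀ x, F x + F (2 * m₁ - x) = 1)
    (hμsym : ∀ x, ProbabilityTheory.cdf μ x + ProbabilityTheory.cdf μ (2 * m₂ - x) = 1)
    (hνsym : ∀ u ∈ Set.Ioo (0 : ℝ) 1, quantile ν u = 2 * m₂ - quantile ν (1 - u)) :
    (∀ x, opA μ ν F x + opA μ ν F (2 * m₁ - x) = 1) ∧ opA μ ν F m₁ = 1 / 2 := by
  obtain ⟨hFmono, hF01, -, -⟩ := hF
  have hFb (x : ℝ) : |F x| ≤ 1 := abs_le.2 ⟨by linarith [(hF01 x).1], (hF01 x).2⟩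
  have hgsym := gaussSmooth_add_reflect hFmono.measurable hFb hFsym
  have hg01 (w : ℝ) : gaussSmooth F w ∈ Set.Ioo 0 1 := by
    have hpos (w : ℝ) := gaussSmooth_pos hFmono hFb (fun x => (hF01 x).1)
      (a := m₁) (by linarith [eq_half_of_add_reflect hFsym]) w
    exact ⟨hpos w, by linarith [hgsym w, hpos (2 * m₁ - w)]⟩
  obtain ⟨r, hKr⟩ := hK.isBounded.subset_closedBall 0
  rw [Real.closedBall_eq_Icc, zero_sub, zero_add] at hKr
  have hν : ν (Set.Icc (-r) r)ᶜ = 0 := measure_mono_null (Set.compl_subset_compl.2 hKr) hνK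
  set Q : ℝ → ℝ := fun w => quantile ν (gaussSmooth F w)
  have hQmono : Monotone Q := fun a b hab =>
    quantile_monotoneOn (hg01 a) (hg01 b) (gaussSmooth_mono hFmono hFb hab)
  have hQb (w : ℝ) : |Q w| ≤ r :=
    abs_le.2 (quantile_mem_Icc hν ⟨(hg01 w).1, (hg01 w).2.le⟩)
  have hQsym (w : ℝ) : Q w + Q (2 * m₁ - w) = 2 * m₂ := by
    simp only [Q, hνsym _ (hg01 w), show gaussSmooth F (2 * m₁ - w) = 1 - gaussSmooth F w by
      linarith [hgsym w]]
    ring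
  have hsym (x : ℝ) : opA μ ν F x + opA μ ν F (2 * m₁ - x) = 1 := by
    rw [opA_eq_cdf_gaussSmooth, opA_eq_cdf_gaussSmooth, ← hμsym (gaussSmooth Q x),
      ← gaussSmooth_add_reflect hQmono.measurable hQb hQsym x, add_sub_cancel_left]
  exact ⟨hsym, eq_half_of_add_reflect hsym⟩
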